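/- arXiv:1711.01206 — 4 statements merged into one kernel-verified Lean document; each statement's English description precedes it below -/
import Mathlib

section
/- Let u ~ N(0, 1) and ε ~ N(0, σ²) be independent real Gaussian random variables with σ ≥ 0. Then E[u · sign(u + ε)] = √(2/(π(σ² + 1))). -/
open MeasureTheory ProbabilityTheory Matrix Real

noncomputable section

/-- `sgn z = 1` if `z ≥ 0`, `-1` otherwise. -/
def sgn (z : ℝ) : ℝ := if 0 ≤ z then 1 else -1

/-- Euclidean (ℓ²) norm of a finite vector. -/
def l2norm {k : ℕ} (v : Fin k → ℝ) : ℝ := Real.sqrt (∑ i, v i ^ 2)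

/-- ℓ¹ norm of a finite vector. -/
def l1norm {k : ℕ} (v : Fin k → ℝ) : ℝ := ∑ i, |v i|

/-- ℓ^∞ norm (maximum absolute entry) of a finite vector. -/
def linfNorm {k : ℕ} (v : Fin k → ℝ) : ℝ := ⨆ i, |v i|

/-- number of nonzero entries of a finite vector. -/
def l0norm {k : ℕ} (v : Fin k → ℝ) : ℕ := (Finset.univ.filter (fun i => v i ≠ 0)).card

/-- largest eigenvalue of a symmetric matrix, as the sup of the Rayleigh quotient
over the Euclidean unit sphere. -/
def gammaMax {ι : Type*} [Fintype ι] (M : Matrix ι ι ℝ) : ℝ :=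
  ⨆ x : {x : ι → ℝ // ∑ i, x i ^ 2 = 1}, (x : ι → ℝ) ⬝ᵥ M.mulVec (x : ι → ℝ)

/-- smallest eigenvalue of a symmetric matrix, as the inf of the Rayleigh quotient
over the Euclidean unit sphere. -/
def gammaMin {ι : Type*} [Fintype ι] (M : Matrix ι ι ℝ) : ℝ :=
  ⨅ x : {x : ι → ℝ // ∑ i, x i ^ 2 = 1}, (x : ι → ℝ) ⬝ᵥ M.mulVec (x : ι → ℝ)

/-- condition number `γ_max / γ_min`. -/
def kappa {ι : Type*} [Fintype ι] (M : Matrix ι ι ℝ) : ℝ := gammaMax M / gammaMin M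

/-- operator norm of a matrix, induced by the Euclidean norms. -/
def opNorm {ι κ : Type*} [Fintype ι] [Fintype κ] (M : Matrix ι κ ℝ) : ℝ :=
  ⨆ x : {x : κ → ℝ // ∑ j, x j ^ 2 = 1}, Real.sqrt (∑ i, (M.mulVec (x : κ → ℝ)) i ^ 2)

/-- maximum absolute entry of a matrix. -/
def matInfNorm {ι κ : Type*} [Fintype ι] [Fintype κ] (M : Matrix ι κ ℝ) : ℝ :=
  ⨆ p : ι × κ, |M p.1 p.2|

/-- A random vector `ψ` is centered Gaussian with covariance matrix `S` iff every linear
functional of it is a centered real Gaussian with the corresponding variance. -/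
def IsGaussianVector {Ω : Type*} [MeasurableSpace Ω] (μ : Measure Ω) {n : ℕ}
    (ψ : Ω → Fin n → ℝ) (S : Matrix (Fin n) (Fin n) ℝ) : Prop :=
  ∀ a : Fin n → ℝ,
    Measure.map (fun ω => ∑ i, a i * ψ ω i) μ =
      gaussianReal 0 (Real.toNNReal (a ⬝ᵥ S.mulVec a))

/-!
By independence and Fubini, `E[u · sgn(u + ε)] = E[g(ε)]` with `g(y) = E[u · sgn(u + y)]` for
`u ~ N(0, 1)`. Since `u · sgn(u + y) = 2 u 1{u ≥ -y} - u` and the centered Gaussian density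
satisfies `φ_v' = -(x / v) φ_v`, the tail moment `∫_{x ≥ a} x dN(0, v)` equals `v φ_v(a)`, so
`g = 2 φ_1`. Finally `E[φ_1(ε)] = φ_{1 + σ²}(0)`, a Gaussian integral, which gives
`2 / √(2π(1 + σ²))`.
-/

open Filter Set
open scoped NNReal Topology

lemma measurable_sgn : Measurable sgn :=
  Measurable.ite (measurableSet_le measurable_const measurable_id) measurable_const
    measurable_const

lemma abs_sgn (z : ℝ) : |sgn z| = 1 := by
  unfold sgn; split <;> simp

lemma mul_sgn_add_eq_two_mul_indicator_sub (x y : ℝ) :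
    x * sgn (x + y) = 2 * (Ici (-y)).indicator (fun x => x) x - x := by
  by_cases h : -y ≤ x
  · rw [indicator_of_mem (mem_Ici.2 h), sgn, if_pos (by linarith)]; ring
  · rw [indicator_of_notMem (by simpa using h), sgn, if_neg (by linarith)]; ring

lemma integrable_id_gaussianReal (m : ℝ) (v : ℝ≥0) : Integrable id (gaussianReal m v) :=
  memLp_one_iff_integrable.1 (by simpa using memLp_id_gaussianReal (μ := m) (v := v) 1)

lemma gaussianPDFReal_zero_neg (v : ℝ≥0) (x : ℝ) :
    gaussianPDFReal 0 v (-x) = gaussianPDFReal 0 v x := by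
  simp [gaussianPDFReal]

lemma gaussianPDFReal_zero_zero (v : ℝ≥0) : gaussianPDFReal 0 v 0 = (√(2 * π * v))⁻¹ := by
  simp [gaussianPDFReal]

lemma hasDerivAt_gaussianPDFReal_zero (v : ℝ≥0) (x : ℝ) :
    HasDerivAt (gaussianPDFReal 0 v) (-(x / v) * gaussianPDFReal 0 v x) x := by
  have hexponent : HasDerivAt (fun y : ℝ => -(y - 0) ^ 2 / (2 * v)) (-(x / v)) x :=
    ((((hasDerivAt_id x).sub_const 0).pow 2).neg.div_const (2 * (v : ℝ))).congr_deriv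
      (by simp only [Nat.cast_ofNat, id_eq, sub_zero, Nat.add_one_sub_one, pow_one, mul_one]
          ring)
  rw [gaussianPDFReal_def]
  exact (hexponent.exp.const_mul _).congr_deriv (by ring)

lemma tendsto_gaussianPDFReal_atTop (m : ℝ) (v : ℝ≥0) :
    Tendsto (gaussianPDFReal m v) atTop (𝓝 0) := by
  rcases eq_or_ne v 0 with rfl | hv
  · rw [gaussianPDFReal_zero_var]; exact tendsto_const_nhds
  have hexponent : Tendsto (fun x => -(x - m) ^ 2 / (2 * v)) atTop atBot := by
    have hsq := (tendsto_pow_atTop two_ne_zero).comp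
      (tendsto_atTop_add_const_right _ (-m) tendsto_id)
    refine (tendsto_neg_atTop_atBot.comp
      (hsq.atTop_div_const (by positivity : (0 : ℝ) < 2 * v))).congr fun x => ?_
    simp [neg_div, sub_eq_add_neg]
  rw [gaussianPDFReal_def, ← mul_zero (√(2 * π * v))⁻¹]
  exact (Real.tendsto_exp_atBot.comp hexponent).const_mul _

lemma integrable_gaussianReal_iff {m : ℝ} {v : ℝ≥0} (hv : v ≠ 0) {f : ℝ → ℝ} :
    Integrable f (gaussianReal m v) ↔ Integrable (fun x => gaussianPDFReal m v x * f x) := by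
  rw [gaussianReal_of_var_ne_zero _ hv, integrable_withDensity_iff_integrable_smul'
    (measurable_gaussianPDF _ _) (ae_of_all _ fun _ => gaussianPDF_lt_top)]
  simp

lemma setIntegral_Ici_id_gaussianReal {v : ℝ≥0} (hv : v ≠ 0) (a : ℝ) :
    ∫ x in Ici a, x ∂gaussianReal 0 v = v * gaussianPDFReal 0 v a := by
  have hdensity : ∫ x in Ici a, x ∂gaussianReal 0 v
      = ∫ x in Ioi a, gaussianPDFReal 0 v x * x := by
    rw [← integral_indicator measurableSet_Ici, integral_gaussianReal_eq_integral_smul hv,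
      ← integral_Ici_eq_integral_Ioi, ← integral_indicator measurableSet_Ici]
    congr with x
    by_cases hx : x ∈ Ici a <;> simp [hx]
  have hderiv : ∀ x ∈ Ici a, HasDerivAt (fun x => -(v * gaussianPDFReal 0 v x))
      (gaussianPDFReal 0 v x * x) x := fun x _ =>
    ((hasDerivAt_gaussianPDFReal_zero v x).const_mul (v : ℝ)).neg.congr_deriv
      (by field_simp [(by exact_mod_cast hv : (v : ℝ) ≠ 0)])
  have hint : IntegrableOn (fun x => gaussianPDFReal 0 v x * x) (Ioi a) :=
    ((integrable_gaussianReal_iff hv).1 (integrable_id_gaussianReal 0 v)).integrableOn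
  have hlim := ((tendsto_gaussianPDFReal_atTop 0 v).const_mul (v : ℝ)).neg
  rw [mul_zero, neg_zero] at hlim
  rw [hdensity, integral_Ioi_of_hasDerivAt_of_tendsto' hderiv hint hlim]
  ring

lemma integral_mul_sgn_add_gaussianReal {v : ℝ≥0} (hv : v ≠ 0) (y : ℝ) :
    ∫ x, x * sgn (x + y) ∂gaussianReal 0 v = 2 * v * gaussianPDFReal 0 v y := by
  have hint : Integrable (fun x => x) (gaussianReal 0 v) := integrable_id_gaussianReal 0 v
  simp_rw [mul_sgn_add_eq_two_mul_indicator_sub]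
  rw [integral_sub ((hint.indicator measurableSet_Ici).const_mul 2) hint, integral_const_mul,
    integral_indicator measurableSet_Ici]
  simp only [setIntegral_Ici_id_gaussianReal hv, gaussianPDFReal_zero_neg,
    integral_id_gaussianReal]
  ring

lemma integral_gaussianPDFReal_gaussianReal {w : ℝ≥0} (hw : w ≠ 0) (v : ℝ≥0) :
    ∫ y, gaussianPDFReal 0 w y ∂gaussianReal 0 v = gaussianPDFReal 0 (w + v) 0 := by
  rcases eq_or_ne v 0 with rfl | hv
  · simp [gaussianReal_zero_var]
  have hw' : (0 : ℝ) < w := by positivity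
  have hv' : (0 : ℝ) < v := by positivity
  have hproduct : ∀ y, gaussianPDFReal 0 v y • gaussianPDFReal 0 w y =
      (√(2 * π * v))⁻¹ * (√(2 * π * w))⁻¹ *
        rexp (-((w + v) / (2 * w * v)) * y ^ 2) := by
    intro y
    simp only [gaussianPDFReal, smul_eq_mul, sub_zero]
    rw [mul_mul_mul_comm, ← Real.exp_add]
    congr 2
    field_simp
    ring
  rw [integral_gaussianReal_eq_integral_smul hv]
  simp_rw [hproduct]
  rw [integral_const_mul, integral_gaussian]
  rw [gaussianPDFReal_zero_zero, NNReal.coe_add, ← Real.sqrt_inv, ← Real.sqrt_inv,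
    ← Real.sqrt_inv, ← Real.sqrt_mul (by positivity),
    ← Real.sqrt_mul (by positivity)]
  congr 1
  field_simp

lemma two_mul_gaussianPDFReal_zero_zero (v : ℝ≥0) :
    2 * gaussianPDFReal 0 v 0 = √(2 / (π * v)) := by
  have h4 : (2 : ℝ) = √(2 ^ 2) := (Real.sqrt_sq zero_le_two).symm
  rw [gaussianPDFReal_zero_zero, ← Real.sqrt_inv, h4, ← Real.sqrt_mul (by positivity)]
  congr 1
  field_simp
  ring

theorem expectation_mul_sign_gaussian_general
    {Ω : Type} [MeasurableSpace Ω] (μ : Measure Ω) [IsProbabilityMeasure μ]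
    (σ : ℝ) (u ε : Ω → ℝ)
    (hu : Measure.map u μ = gaussianReal 0 1)
    (hε : Measure.map ε μ = gaussianReal 0 (Real.toNNReal (σ ^ 2)))
    (hindep : IndepFun u ε μ) :
    ∫ ω, u ω * sgn (u ω + ε ω) ∂μ = Real.sqrt (2 / (Real.pi * (σ ^ 2 + 1))) := by
  set v := Real.toNNReal (σ ^ 2)
  have hu_meas : AEMeasurable u μ := aemeasurable_of_map_neZero (by rw [hu]; infer_instance)
  have hε_meas : AEMeasurable ε μ := aemeasurable_of_map_neZero (by rw [hε]; infer_instance)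
  have hlaw : μ.map (fun ω => (u ω, ε ω)) = (gaussianReal 0 1).prod (gaussianReal 0 v) := by
    rw [(indepFun_iff_map_prod_eq_prod_map_map hu_meas hε_meas).1 hindep, hu, hε]
  have hmeas : Measurable fun p : ℝ × ℝ => p.1 * sgn (p.1 + p.2) :=
    measurable_fst.mul (measurable_sgn.comp (measurable_fst.add measurable_snd))
  have hint : Integrable (fun p : ℝ × ℝ => p.1 * sgn (p.1 + p.2))
      ((gaussianReal 0 1).prod (gaussianReal 0 v)) :=
    ((integrable_id_gaussianReal 0 1).comp_fst _).mono hmeas.aestronglyMeasurable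
      (ae_of_all _ fun p => by simp [abs_sgn])
  calc ∫ ω, u ω * sgn (u ω + ε ω) ∂μ
      = ∫ p, p.1 * sgn (p.1 + p.2) ∂(gaussianReal 0 1).prod (gaussianReal 0 v) := by
        rw [← hlaw, integral_map (hu_meas.prodMk hε_meas) hmeas.aestronglyMeasurable]
    _ = ∫ y, 2 * gaussianPDFReal 0 1 y ∂gaussianReal 0 v := by
        simp only [integral_prod_symm _ hint, integral_mul_sgn_add_gaussianReal one_ne_zero,
          NNReal.coe_one, mul_one]
    _ = 2 * gaussianPDFReal 0 (1 + v) 0 := by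
        rw [integral_const_mul, integral_gaussianPDFReal_gaussianReal one_ne_zero]
    _ = √(2 / (π * (σ ^ 2 + 1))) := by
        rw [two_mul_gaussianPDFReal_zero_zero, NNReal.coe_add, Real.coe_toNNReal _ (sq_nonneg σ),
          NNReal.coe_one, add_comm 1]

/-- If `u ~ N(0,1)` and `ε ~ N(0, σ²)` are independent, then
`E[u · sign(u + ε)] = √(2/(π(σ² + 1)))`. -/
theorem expectation_mul_sign_gaussian
    {Ω : Type} [MeasurableSpace Ω] (μ : Measure Ω) [IsProbabilityMeasure μ]
    (σ : ℝ) (hσ : 0 ≤ σ) (u ε : Ω → ℝ)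
    (hu : Measure.map u μ = gaussianReal 0 1)
    (hε : Measure.map ε μ = gaussianReal 0 (Real.toNNReal (σ ^ 2)))
    (hindep : IndepFun u ε μ) :
    ∫ ω, u ω * sgn (u ω + ε ω) ∂μ = Real.sqrt (2 / (Real.pi * (σ ^ 2 + 1))) :=
  expectation_mul_sign_gaussian_general μ σ u ε hu hε hindep
end
end

section
/- Let Ψ ∈ ℝ^{m×n}, y ∈ ℝᵐ, λ > 0. A vector x ∈ ℝⁿ is a global minimizer of the function x ↦ (1/(2m))‖y − Ψx‖₂² + λ‖x‖₁ if and only if, with d = Ψᵗ(y − Ψx)/m, one has x = S_λ(x + d). -/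
open MeasureTheory ProbabilityTheory Matrix Real

noncomputable section

/-- componentwise soft-thresholding operator `S_λ(z) = sign(z)·max{|z| − λ, 0}`. -/
def softThresh (lam z : ℝ) : ℝ := sgn z * max (|z| - lam) 0

/-!
The least-squares term `q` of the objective `F = q + λ‖·‖₁` is exactly quadratic around `x`:
`q z = q x - ⟪d, z - x⟫ + ‖Ψ (z - x)‖² / (2m)`. Comparing `F` along the segment from `x` to `z`
and letting the step tend to `0` kills the quadratic remainder, so by convexity of `‖·‖₁` the
point `x` minimises `F` iff `d` is a subgradient of `λ‖·‖₁` at `x`. That condition splits into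
the scalar conditions `|d j| ≤ λ`, `d j * x j = λ |x j|`, which say `x j = S_λ (x j + d j)`.
-/

open Set Filter Topology

theorem ConvexOn.forall_le_sub_add_iff {E : Type*} [AddCommGroup E] [Module ℝ E] {g Q : E → ℝ}
    (hg : ConvexOn ℝ univ g) (ℓ : E →ₗ[ℝ] ℝ) (hQ : ∀ w, 0 ≤ Q w)
    (hQ_smul : ∀ (s : ℝ) w, Q (s • w) = s ^ 2 * Q w) (x : E) :
    (∀ z, g x ≤ g z - ℓ (z - x) + Q (z - x)) ↔ ∀ z, ℓ (z - x) ≤ g z - g x := by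
  refine ⟨fun h z => ?_, fun h z => by linarith [h z, hQ (z - x)]⟩
  have hsmall : ∀ s ∈ Ioo (0 : ℝ) 1, ℓ (z - x) ≤ g z - g x + s * Q (z - x) := by
    rintro s ⟨hs₀, hs₁⟩
    have hchord : g (x + s • (z - x)) ≤ (1 - s) * g x + s * g z := by
      have := hg.2 (mem_univ x) (mem_univ z) (by linarith : 0 ≤ 1 - s) hs₀.le (by ring)
      rwa [show (1 - s) • x + s • z = x + s • (z - x) by module] at this
    have hstep := h (x + s • (z - x))
    rw [add_sub_cancel_left, map_smul, hQ_smul, smul_eq_mul] at hstep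
    have hscaled : s * ℓ (z - x) ≤ s * (g z - g x + s * Q (z - x)) := by nlinarith
    exact le_of_mul_le_mul_left hscaled hs₀
  have hlim : Tendsto (fun s => g z - g x + s * Q (z - x)) (𝓝[>] 0) (𝓝 (g z - g x)) := by
    have hcont : Continuous fun s : ℝ => g z - g x + s * Q (z - x) := by fun_prop
    exact tendsto_nhdsWithin_of_tendsto_nhds (hcont.tendsto' 0 _ (by simp))
  exact ge_of_tendsto hlim (by filter_upwards [Ioo_mem_nhdsGT one_pos] using hsmall)

theorem forall_sum_le_sum_iff {ι : Type*} [Fintype ι] (φ : ι → ℝ → ℝ) (x : ι → ℝ) :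
    (∀ z : ι → ℝ, ∑ i, φ i (x i) ≤ ∑ i, φ i (z i)) ↔ ∀ i t, φ i (x i) ≤ φ i t := by
  classical
  refine ⟨fun h i t => ?_, fun h z => Finset.sum_le_sum fun i _ => h i (z i)⟩
  have hupdate : ∑ k, φ k (Function.update x i t k) - ∑ k, φ k (x k) = φ i t - φ i (x i) := by
    rw [← Finset.sum_sub_distrib,
      Finset.sum_eq_single i (fun k _ hk => by simp [hk]) (by simp), Function.update_self]
  linarith [h (Function.update x i t)]

theorem convexOn_l1norm (k : ℕ) : ConvexOn ℝ univ (l1norm : (Fin k → ℝ) → ℝ) := by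
  refine ⟨convex_univ, fun x _ z _ a b ha hb _ => ?_⟩
  simp only [l1norm, smul_eq_mul, Finset.mul_sum, ← Finset.sum_add_distrib]
  refine Finset.sum_le_sum fun i _ => (abs_add_le _ _).trans_eq ?_
  simp [abs_mul, abs_of_nonneg ha, abs_of_nonneg hb]

theorem subgradient_l1norm_iff {k : ℕ} (lam : ℝ) (d x : Fin k → ℝ) :
    (∀ z, d ⬝ᵥ (z - x) ≤ lam * l1norm z - lam * l1norm x) ↔
      ∀ j t, d j * (t - x j) ≤ lam * |t| - lam * |x j| := by
  have hsep : ∀ z, d ⬝ᵥ (z - x) ≤ lam * l1norm z - lam * l1norm x ↔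
      ∑ j, (lam * |x j| - d j * x j) ≤ ∑ j, (lam * |z j| - d j * z j) := fun z => by
    simp only [dotProduct, l1norm, Finset.mul_sum, Finset.sum_sub_distrib, Pi.sub_apply, mul_sub]
    constructor <;> intro <;> linarith
  simp only [hsep, forall_sum_le_sum_iff (fun j t => lam * |t| - d j * t) x]
  exact forall₂_congr fun j t => by constructor <;> intro <;> linarith

theorem subgradient_abs_iff {lam d x : ℝ} :
    (∀ t, d * (t - x) ≤ lam * |t| - lam * |x|) ↔ |d| ≤ lam ∧ d * x = lam * |x| := by
  constructor
  · intro h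
    have hdx : d * x = lam * |x| := by
      have h₀ := h 0
      have h₂ := h (2 * x)
      rw [abs_mul, abs_two] at h₂
      rw [abs_zero] at h₀
      linarith
    refine ⟨abs_le.2 ⟨?_, ?_⟩, hdx⟩
    · have := h (-1)
      norm_num at this
      linarith
    · have := h 1
      norm_num at this
      linarith
  · rintro ⟨hd, hdx⟩ t
    have : d * t ≤ lam * |t| :=
      (le_abs_self _).trans (by rw [abs_mul]; exact mul_le_mul_of_nonneg_right hd (abs_nonneg t))
    linarith

theorem softThresh_eq_ite {lam : ℝ} (hlam : 0 ≤ lam) (v : ℝ) :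
    softThresh lam v = if lam < v then v - lam else if v < -lam then v + lam else 0 := by
  unfold softThresh sgn
  split_ifs with h₁ <;> try (exfalso; linarith)
  · rw [abs_of_nonneg h₁, max_eq_left (by linarith), one_mul]
  · rw [max_eq_right (by linarith [abs_of_nonneg h₁]), mul_zero]
  · rw [abs_of_neg (by linarith), max_eq_left (by linarith)]
    ring
  · rw [max_eq_right (by linarith [abs_of_neg (not_le.1 h₁)]), mul_zero]

theorem eq_softThresh_add_iff {lam d x : ℝ} (hlam : 0 ≤ lam) :
    x = softThresh lam (x + d) ↔ |d| ≤ lam ∧ d * x = lam * |x| := by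
  rw [softThresh_eq_ite hlam, abs_le]
  rcases lt_trichotomy x 0 with hx | rfl | hx
  · rw [abs_of_neg hx]
    split_ifs <;> constructor <;> intro h <;>
      first | (refine ⟨⟨?_, ?_⟩, ?_⟩ <;> nlinarith) | nlinarith
  · simp only [zero_add, abs_zero, mul_zero, and_true]
    split_ifs <;> constructor <;> intro h <;> first | (refine ⟨?_, ?_⟩ <;> linarith) | linarith
  · rw [abs_of_pos hx]
    split_ifs <;> constructor <;> intro h <;>
      first | (refine ⟨⟨?_, ?_⟩, ?_⟩ <;> nlinarith) | nlinarith

theorem sum_sq_sub_mulVec {ι κ : Type*} [Fintype ι] [Fintype κ] (A : Matrix ι κ ℝ)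
    (y : ι → ℝ) (x z : κ → ℝ) :
    ∑ i, (y i - (A *ᵥ z) i) ^ 2 = ∑ i, (y i - (A *ᵥ x) i) ^ 2
      - 2 * ((Aᵀ *ᵥ (y - A *ᵥ x)) ⬝ᵥ (z - x)) + ∑ i, (A *ᵥ (z - x)) i ^ 2 := by
  have hz : A *ᵥ z = A *ᵥ x + A *ᵥ (z - x) := by rw [← mulVec_add, add_sub_cancel]
  rw [hz, mulVec_transpose, ← dotProduct_mulVec]
  simp only [dotProduct, Pi.add_apply, Pi.sub_apply, Finset.mul_sum, ← Finset.sum_sub_distrib,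
    ← Finset.sum_add_distrib]
  exact Finset.sum_congr rfl fun i _ => by ring

/-- `x` is a global minimizer of `(1/2m)‖y − Ψx‖₂² + λ‖x‖₁` if and only
if `x = S_λ(x + d)` where `d = Ψᵗ(y − Ψx)/m`. -/
theorem l1_least_squares_kkt_iff
    (m n : ℕ) (Ψ : Matrix (Fin m) (Fin n) ℝ) (y : Fin m → ℝ) (lam : ℝ) (hlam : 0 < lam)
    (x : Fin n → ℝ) :
    (∀ z : Fin n → ℝ,
        1 / (2 * (m : ℝ)) * ∑ i, (y i - Ψ.mulVec x i) ^ 2 + lam * l1norm x ≤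
          1 / (2 * (m : ℝ)) * ∑ i, (y i - Ψ.mulVec z i) ^ 2 + lam * l1norm z) ↔
      (∀ j, x j =
        softThresh lam (x j + (Ψᵀ.mulVec (fun i => y i - Ψ.mulVec x i)) j / (m : ℝ))) := by
  set c : ℝ := 1 / (2 * (m : ℝ))
  set d : Fin n → ℝ := fun j => (Ψᵀ *ᵥ (y - Ψ *ᵥ x)) j / m
  set Q : (Fin n → ℝ) → ℝ := fun w => c * ∑ i, (Ψ *ᵥ w) i ^ 2
  have hQ : ∀ w, 0 ≤ Q w := fun w => by positivity
  have hQ_smul : ∀ (s : ℝ) w, Q (s • w) = s ^ 2 * Q w := fun s w => by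
    simp only [Q, mulVec_smul, Pi.smul_apply, smul_eq_mul, mul_pow, ← Finset.mul_sum]
    ring
  -- `2 * c = 1 / m` holds also for `m = 0` (both sides are `0`), so no case split is needed
  have hexpand : ∀ z, c * ∑ i, (y i - (Ψ *ᵥ z) i) ^ 2 =
      c * ∑ i, (y i - (Ψ *ᵥ x) i) ^ 2 - d ⬝ᵥ (z - x) + Q (z - x) := fun z => by
    simp only [sum_sq_sub_mulVec Ψ y x z, Q, d, c, dotProduct, div_mul_eq_mul_div,
      ← Finset.sum_div]
    ring
  calc _ ↔ ∀ z, lam * l1norm x ≤ lam * l1norm z - d ⬝ᵥ (z - x) + Q (z - x) :=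
        forall_congr' fun z => by rw [hexpand z]; constructor <;> intro <;> linarith
    _ ↔ ∀ z, d ⬝ᵥ (z - x) ≤ lam * l1norm z - lam * l1norm x :=
        ((convexOn_l1norm n).smul hlam.le).forall_le_sub_add_iff (dotProductBilin ℝ ℝ d)
          hQ hQ_smul x
    _ ↔ _ := by
        rw [subgradient_l1norm_iff]
        refine forall_congr' fun j => ?_
        rw [subgradient_abs_iff, eq_softThresh_add_iff hlam.le]
        rfl
end
end

section
/- Let Ψ ∈ ℝ^{m×n}, y ∈ ℝᵐ, λ > 0 and x̃* ∈ ℝⁿ, and set Δ = y − Ψ x̃*. Let x_{ℓ₁} be a minimizer of x ↦ (1/(2m))‖y − Ψx‖₂² + λ‖x‖₁, and set R = x_{ℓ₁} − x̃*. Let A* = supp(x̃*) and I* its complement in [n]. If ‖ΨᵗΔ/m‖_∞ ≤ λ/2, then (1/m)‖ΨR‖₂² + λ‖R_{I*}‖₁ ≤ 3λ‖R_{A*}‖₁; in particular ‖R_{I*}‖₁ ≤ 3‖R_{A*}‖₁, i.e., R belongs to the cone C_{A*} = { z ∈ ℝⁿ : ‖z_{I*}‖₁ ≤ 3‖z_{A*}‖₁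 }. -/
open MeasureTheory ProbabilityTheory Matrix Real

noncomputable section

/-!
The proof is the "basic inequality" of the Lasso. Comparing the objective at `x_{ℓ₁}` with its
value at `x̃*` and expanding `y − Ψx_{ℓ₁} = Δ − ΨR` gives
`(1/m)‖ΨR‖₂² ≤ 2⟨ΨᵗΔ/m, R⟩ + 2λ(‖x̃*‖₁ − ‖x_{ℓ₁}‖₁)`.
Hölder's inequality and the noise bound control the first term by `λ‖R‖₁`, and since `x̃*`
vanishes on `I*`, the triangle inequality gives `‖x̃*‖₁ − ‖x_{ℓ₁}‖₁ ≤ ‖R_{A*}‖₁ − ‖R_{I*}‖₁`.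
-/

lemma l1norm_nonneg {k : ℕ} (v : Fin k → ℝ) : 0 ≤ l1norm v :=
  Finset.sum_nonneg fun _ _ => abs_nonneg _

lemma l1norm_eq_sum_add_sum_compl {k : ℕ} (v : Fin k → ℝ) (A : Finset (Fin k)) :
    l1norm v = ∑ j ∈ A, |v j| + ∑ j ∈ Aᶜ, |v j| :=
  (Finset.sum_add_sum_compl A _).symm

lemma abs_le_linfNorm {k : ℕ} (v : Fin k → ℝ) (j : Fin k) : |v j| ≤ linfNorm v :=
  le_ciSup (f := fun i => |v i|) (Set.finite_range _).bddAbove j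

lemma dotProduct_le_linfNorm_mul_l1norm {k : ℕ} (w v : Fin k → ℝ) :
    w ⬝ᵥ v ≤ linfNorm w * l1norm v := by
  rw [l1norm, Finset.mul_sum]
  refine Finset.sum_le_sum fun j _ => ?_
  calc w j * v j ≤ |w j| * |v j| := (le_abs_self _).trans (abs_mul _ _).le
    _ ≤ linfNorm w * |v j| := mul_le_mul_of_nonneg_right (abs_le_linfNorm w j) (abs_nonneg _)

lemma l1norm_sub_l1norm_le {k : ℕ} (x x₀ : Fin k → ℝ) (A : Finset (Fin k))
    (hA : ∀ j ∉ A, x₀ j = 0) :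
    l1norm x₀ - l1norm x ≤ ∑ j ∈ A, |x j - x₀ j| - ∑ j ∈ Aᶜ, |x j - x₀ j| := by
  have h_on : ∑ j ∈ A, |x₀ j| - ∑ j ∈ A, |x j| ≤ ∑ j ∈ A, |x j - x₀ j| := by
    rw [← Finset.sum_sub_distrib]
    exact Finset.sum_le_sum fun j _ => abs_sub_comm (x j) (x₀ j) ▸ abs_sub_abs_le_abs_sub _ _
  have h_off : ∀ j ∈ Aᶜ, |x₀ j| = 0 ∧ |x j| = |x j - x₀ j| := fun j hj => by
    simp [hA j (Finset.mem_compl.mp hj)]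
  rw [l1norm_eq_sum_add_sum_compl x₀ A, l1norm_eq_sum_add_sum_compl x A,
    Finset.sum_congr rfl fun j hj => (h_off j hj).1,
    Finset.sum_congr rfl fun j hj => (h_off j hj).2]
  simp only [Finset.sum_const_zero]
  linarith

lemma lasso_basic_inequality {m n : ℕ} (Ψ : Matrix (Fin m) (Fin n) ℝ) (y : Fin m → ℝ) (lam : ℝ)
    (x₀ x : Fin n → ℝ)
    (hmin : 1 / (2 * (m : ℝ)) * ∑ i, (y i - (Ψ *ᵥ x) i) ^ 2 + lam * l1norm x ≤
      1 / (2 * (m : ℝ)) * ∑ i, (y i - (Ψ *ᵥ x₀) i) ^ 2 + lam * l1norm x₀) :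
    1 / (m : ℝ) * ∑ i, (Ψ *ᵥ fun j => x j - x₀ j) i ^ 2 ≤
      2 * ((fun j => (Ψᵀ *ᵥ fun i => y i - (Ψ *ᵥ x₀) i) j / m) ⬝ᵥ fun j => x j - x₀ j) +
        2 * lam * (l1norm x₀ - l1norm x) := by
  set Δ : Fin m → ℝ := fun i => y i - (Ψ *ᵥ x₀) i
  set v := Ψ *ᵥ fun j => x j - x₀ j
  have h_resid : ∀ i, y i - (Ψ *ᵥ x) i = Δ i - v i := fun i => by
    simp only [Δ, v, ← Pi.sub_def, Matrix.mulVec_sub, Pi.sub_apply]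
    ring
  have h_expand : ∑ i, (y i - (Ψ *ᵥ x) i) ^ 2 = ∑ i, Δ i ^ 2 - 2 * (Δ ⬝ᵥ v) + ∑ i, v i ^ 2 := by
    simp only [h_resid, dotProduct, Finset.mul_sum, ← Finset.sum_sub_distrib,
      ← Finset.sum_add_distrib]
    exact Finset.sum_congr rfl fun i _ => by ring
  have h_adjoint : ((fun j => (Ψᵀ *ᵥ Δ) j / m) ⬝ᵥ fun j => x j - x₀ j) =
      1 / (m : ℝ) * (Δ ⬝ᵥ v) := by
    calc ((fun j => (Ψᵀ *ᵥ Δ) j / m) ⬝ᵥ fun j => x j - x₀ j)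
        = 1 / (m : ℝ) * ((Ψᵀ *ᵥ Δ) ⬝ᵥ fun j => x j - x₀ j) := by
          simp only [dotProduct, Finset.mul_sum]
          exact Finset.sum_congr rfl fun j _ => by ring
      _ = 1 / (m : ℝ) * (Δ ⬝ᵥ v) := by rw [Matrix.mulVec_transpose, ← Matrix.dotProduct_mulVec]
  have h_half : 1 / (m : ℝ) = 2 * (1 / (2 * (m : ℝ))) := by field_simp
  rw [h_expand] at hmin
  rw [h_adjoint, h_half]
  linarith

/-- If `x_{ℓ₁}` minimizes `(1/2m)‖y − Ψx‖₂² + λ‖x‖₁` and the effective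
noise `Δ = y − Ψx̃*` satisfies `‖ΨᵗΔ/m‖_∞ ≤ λ/2`, then `R = x_{ℓ₁} − x̃*` satisfies
`(1/m)‖ΨR‖₂² + λ‖R_{I*}‖₁ ≤ 3λ‖R_{A*}‖₁`; in particular `R` lies in the cone
`{z : ‖z_{I*}‖₁ ≤ 3‖z_{A*}‖₁}` where `A* = supp(x̃*)`. -/
theorem l1_minimizer_cone_condition
    (m n : ℕ) (Ψ : Matrix (Fin m) (Fin n) ℝ) (y : Fin m → ℝ) (lam : ℝ) (hlam : 0 < lam)
    (xtstar xl1 : Fin n → ℝ)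
    (hmin : ∀ z : Fin n → ℝ,
      1 / (2 * (m : ℝ)) * ∑ i, (y i - Ψ.mulVec xl1 i) ^ 2 + lam * l1norm xl1 ≤
        1 / (2 * (m : ℝ)) * ∑ i, (y i - Ψ.mulVec z i) ^ 2 + lam * l1norm z)
    (hnoise : linfNorm
        (fun j => (Ψᵀ.mulVec (fun i => y i - Ψ.mulVec xtstar i)) j / (m : ℝ)) ≤ lam / 2) :
    (1 / (m : ℝ)) * (∑ i, (Ψ.mulVec (fun j => xl1 j - xtstar j) i) ^ 2) +
        lam * ∑ j ∈ (Finset.univ.filter (fun j => xtstar j ≠ 0))ᶜ, |xl1 j - xtstar j| ≤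
      3 * lam * ∑ j ∈ Finset.univ.filter (fun j => xtstar j ≠ 0), |xl1 j - xtstar j| ∧
    ∑ j ∈ (Finset.univ.filter (fun j => xtstar j ≠ 0))ᶜ, |xl1 j - xtstar j| ≤
      3 * ∑ j ∈ Finset.univ.filter (fun j => xtstar j ≠ 0), |xl1 j - xtstar j| := by
  set A := Finset.univ.filter fun j => xtstar j ≠ 0
  have h_basic := lasso_basic_inequality Ψ y lam xtstar xl1 (hmin xtstar)
  have h_holder := (dotProduct_le_linfNorm_mul_l1norm _ fun j => xl1 j - xtstar j).trans
    (mul_le_mul_of_nonneg_right hnoise (l1norm_nonneg _))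
  have h_l1 := l1norm_sub_l1norm_le xl1 xtstar A fun j hj => by simpa [A] using hj
  have h_split := l1norm_eq_sum_add_sum_compl (fun j => xl1 j - xtstar j) A
  have h_cone : 1 / (m : ℝ) * ∑ i, (Ψ *ᵥ fun j => xl1 j - xtstar j) i ^ 2 +
      lam * ∑ j ∈ Aᶜ, |xl1 j - xtstar j| ≤ 3 * lam * ∑ j ∈ A, |xl1 j - xtstar j| := by
    linarith [mul_le_mul_of_nonneg_left h_l1 hlam.le, congrArg (lam * ·) h_split]
  have h_fit_nonneg : 0 ≤ 1 / (m : ℝ) * ∑ i, (Ψ *ᵥ fun j => xl1 j - xtstar j) i ^ 2 := by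
    positivity
  refine ⟨h_cone, le_of_mul_le_mul_left ?_ hlam⟩
  linarith
end
end

section
/- Let z ∈ ℝⁿ and s ≥ 1. Order the indices k₁, …, k_n so that |z_{k₁}| ≥ |z_{k₂}| ≥ … ≥ |z_{k_n}|, let A = {k₁, …, k_s} be the indices of the s largest-magnitude entries, and for t ≥ 1 let I_t = {k_{st+1}, …, k_{(t+1)s}} (intersected with [n]). If ‖z_{Aᶜ}‖₁ ≤ 3‖z_A‖₁, then Σ_{t≥1} ‖z_{I_t}‖₂ ≤ 4‖z_A‖₂, and consequently ‖z‖₂² ≤ 17‖z_A‖₂². -/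
open MeasureTheory ProbabilityTheory Matrix Real

noncomputable section

/-! Extending the sorted magnitudes `|z (k j)|` by zeros gives an antitone sequence `a` on `ℕ`,
in which `I t` becomes the block `[s t, s (t + 1))` and every block has exactly `s` entries.
Each entry of block `t + 1` is at most the average of block `t`, so
`‖z_{I_{t+1}}‖₂ ≤ √s · ‖z_{I_t}‖₁ / s = ‖z_{I_t}‖₁ / √s`. Summing over `t`,
`Σ_{t≥1} ‖z_{I_t}‖₂ ≤ ‖z‖₁ / √s ≤ 4 ‖z_A‖₁ / √s ≤ 4 ‖z_A‖₂` by the cone condition and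
Cauchy–Schwarz, and `‖z_{Aᶜ}‖₂² ≤ (Σ_{t≥1} ‖z_{I_t}‖₂)² ≤ 16 ‖z_A‖₂²`. -/

open Finset

theorem sqrt_sum_sq_le_sum_div_sqrt_card {ι : Type*} {P Q : Finset ι} {a : ι → ℝ}
    (ha : 0 ≤ a) (hPQ : ∀ i ∈ P, ∀ j ∈ Q, a j ≤ a i) (hcard : #Q ≤ #P) :
    √(∑ j ∈ Q, a j ^ 2) ≤ (∑ i ∈ P, a i) / √(#P) := by
  rcases P.eq_empty_or_nonempty with rfl | hP
  · simp_all
  set S := ∑ i ∈ P, a i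
  have hcardP : (0 : ℝ) < #P := by exact_mod_cast hP.card_pos
  have hle_avg : ∀ j ∈ Q, a j ≤ S / #P := fun j hj => by
    rw [le_div_iff₀ hcardP, mul_comm, ← nsmul_eq_mul]
    exact card_nsmul_le_sum P a (a j) fun i hi => hPQ i hi j hj
  have hsq : ∑ j ∈ Q, a j ^ 2 ≤ (S / √(#P)) ^ 2 :=
    calc ∑ j ∈ Q, a j ^ 2 ≤ ∑ _j ∈ Q, (S / #P) ^ 2 :=
          sum_le_sum fun j hj => pow_le_pow_left₀ (ha j) (hle_avg j hj) 2
      _ ≤ #P * (S / #P) ^ 2 := by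
          rw [sum_const, nsmul_eq_mul]; gcongr
      _ = (S / √(#P)) ^ 2 := by
          rw [div_pow, div_pow, Real.sq_sqrt hcardP.le]
          field_simp
  have hS : 0 ≤ S / √(#P) := div_nonneg (sum_nonneg fun i _ => ha i) (Real.sqrt_nonneg _)
  exact Real.sqrt_le_sqrt hsq |>.trans_eq (Real.sqrt_sq hS)

theorem sum_range_mul_eq_sum_sum_Ico {M : Type*} [AddCommMonoid M] (f : ℕ → M) (s N : ℕ) :
    ∑ j ∈ range (s * N), f j = ∑ t ∈ range N, ∑ j ∈ Ico (s * t) (s * (t + 1)), f j := by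
  induction N with
  | zero => simp
  | succ N ih =>
    rw [sum_range_succ, ← ih, sum_range_add_sum_Ico _ (Nat.mul_le_mul_left s N.le_succ)]

section Antitone

variable {a : ℕ → ℝ} (ha : Antitone a) (h0 : 0 ≤ a) {s N : ℕ} {C : ℝ}

include ha h0

theorem sqrt_sum_sq_Ico_succ_le (t : ℕ) :
    √(∑ j ∈ Ico (s * (t + 1)) (s * (t + 1 + 1)), a j ^ 2) ≤
      (∑ j ∈ Ico (s * t) (s * (t + 1)), a j) / √s := by
  have hcard : ∀ u, #(Ico (s * u) (s * (u + 1))) = s := fun u => by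
    rw [Nat.card_Ico, mul_add_one, Nat.add_sub_cancel_left]
  have h := sqrt_sum_sq_le_sum_div_sqrt_card h0
    (P := Ico (s * t) (s * (t + 1))) (Q := Ico (s * (t + 1)) (s * (t + 1 + 1)))
    (fun i hi j hj => ha ((mem_Ico.1 hi).2.trans_le (mem_Ico.1 hj).1).le)
    (by rw [hcard, hcard])
  rwa [hcard] at h

theorem sum_sqrt_sum_sq_Ico_le :
    ∑ t ∈ Icc 1 N, √(∑ j ∈ Ico (s * t) (s * (t + 1)), a j ^ 2) ≤
      (∑ j ∈ range (s * N), a j) / √s := by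
  rw [sum_range_mul_eq_sum_sum_Ico, sum_div, ← Ico_add_one_right_eq_Icc, sum_Ico_eq_sum_range,
    Nat.add_sub_cancel]
  refine sum_le_sum fun t _ => ?_
  rw [add_comm 1 t]
  exact sqrt_sum_sq_Ico_succ_le ha h0 t

theorem sum_sqrt_sum_sq_Ico_le_of_sum_le (hs : 0 < s) (hC : 0 ≤ C)
    (hcone : ∑ j ∈ range (s * N), a j ≤ C * ∑ j ∈ range s, a j) :
    ∑ t ∈ Icc 1 N, √(∑ j ∈ Ico (s * t) (s * (t + 1)), a j ^ 2) ≤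
      C * √(∑ j ∈ range s, a j ^ 2) := by
  have hcauchy : ∑ j ∈ range s, a j ≤ √s * √(∑ j ∈ range s, a j ^ 2) := by
    have h := sq_sum_le_card_mul_sum_sq (s := range s) (f := a)
    rw [card_range] at h
    rw [← Real.sqrt_mul (Nat.cast_nonneg _)]
    exact Real.le_sqrt_of_sq_le h
  calc _ ≤ (∑ j ∈ range (s * N), a j) / √s := sum_sqrt_sum_sq_Ico_le ha h0
    _ ≤ C * (√s * √(∑ j ∈ range s, a j ^ 2)) / √s := by gcongr; exact hcone.trans (by gcongr)
    _ = C * √(∑ j ∈ range s, a j ^ 2) := by field_simp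

theorem sum_range_sq_le_of_sum_le (hs : 0 < s) (hC : 0 ≤ C)
    (hcone : ∑ j ∈ range (s * N), a j ≤ C * ∑ j ∈ range s, a j) :
    ∑ j ∈ range (s * (N + 1)), a j ^ 2 ≤ (1 + C ^ 2) * ∑ j ∈ range s, a j ^ 2 := by
  set E : ℕ → ℝ := fun t => ∑ j ∈ Ico (s * t) (s * (t + 1)), a j ^ 2
  have hE : ∀ t, 0 ≤ E t := fun t => sum_nonneg fun j _ => sq_nonneg _
  have hE0 : E 0 = ∑ j ∈ range s, a j ^ 2 := by simp [E]
  have htail : ∑ t ∈ Icc 1 N, E t ≤ C ^ 2 * E 0 :=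
    calc ∑ t ∈ Icc 1 N, E t = ∑ t ∈ Icc 1 N, √(E t) ^ 2 :=
          sum_congr rfl fun t _ => (Real.sq_sqrt (hE t)).symm
      _ ≤ (∑ t ∈ Icc 1 N, √(E t)) ^ 2 :=
          sum_sq_le_sq_sum_of_nonneg fun t _ => Real.sqrt_nonneg _
      _ ≤ (C * √(E 0)) ^ 2 := by
          gcongr
          rw [hE0]
          exact sum_sqrt_sum_sq_Ico_le_of_sum_le ha h0 hs hC hcone
      _ = C ^ 2 * E 0 := by rw [mul_pow, Real.sq_sqrt (hE 0)]
  rw [sum_range_mul_eq_sum_sum_Ico, sum_range_eq_add_Ico _ (Nat.add_one_pos N),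
    Ico_add_one_right_eq_Icc, ← hE0]
  linarith

end Antitone

def zeroExtend {n : ℕ} (v : Fin n → ℝ) (j : ℕ) : ℝ := if h : j < n then v ⟨j, h⟩ else 0

section ZeroExtend

variable {n : ℕ} {v : Fin n → ℝ}

@[simp]
theorem zeroExtend_coe (i : Fin n) : zeroExtend v i = v i := dif_pos i.isLt

theorem zeroExtend_of_le {j : ℕ} (hj : n ≤ j) : zeroExtend v j = 0 := dif_neg hj.not_gt

theorem zeroExtend_nonneg (hv : 0 ≤ v) : 0 ≤ zeroExtend v := fun j => by
  unfold zeroExtend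
  split_ifs
  exacts [hv _, le_rfl]

theorem antitone_zeroExtend (hv : Antitone v) (h0 : 0 ≤ v) : Antitone (zeroExtend v) := by
  intro i j hij
  by_cases hj : j < n
  · have hi : i < n := hij.trans_lt hj
    simpa [zeroExtend, hi, hj] using hv (Fin.mk_le_mk.2 hij)
  · rw [zeroExtend_of_le (not_lt.1 hj)]
    exact zeroExtend_nonneg h0 i

theorem apply_zeroExtend {φ : ℝ → ℝ} (hφ : φ 0 = 0) (j : ℕ) :
    φ (zeroExtend v j) = zeroExtend (φ ∘ v) j := by
  unfold zeroExtend
  split_ifs <;> simp [hφ]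

theorem sum_zeroExtend {F : Finset (Fin n)} {T : Finset ℕ} (hFT : ∀ i : Fin n, i ∈ F ↔ ↑i ∈ T) :
    ∑ j ∈ T, zeroExtend v j = ∑ i ∈ F, v i := by
  calc ∑ j ∈ T, zeroExtend v j = ∑ j ∈ F.map Fin.valEmbedding, zeroExtend v j :=
        (sum_subset (fun j hj => ?_) fun j hjT hjF => zeroExtend_of_le ?_).symm
    _ = ∑ i ∈ F, v i := by simp
  · obtain ⟨i, hi, rfl⟩ := mem_map.1 hj
    exact (hFT i).1 hi
  · by_contra! hj
    exact hjF (mem_map.2 ⟨⟨j, hj⟩, (hFT ⟨j, hj⟩).2 hjT, rfl⟩)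

end ZeroExtend

theorem sum_image_eq_sum_zeroExtend {n : ℕ} {k : Fin n → Fin n} (hk : Function.Injective k)
    (w : Fin n → ℝ) {φ : ℝ → ℝ} (hφ : φ 0 = 0) {F : Finset (Fin n)} {T : Finset ℕ}
    (hFT : ∀ i : Fin n, i ∈ F ↔ ↑i ∈ T) :
    ∑ j ∈ F.image k, φ (w j) = ∑ j ∈ T, φ (zeroExtend (w ∘ k) j) := by
  simp_rw [apply_zeroExtend hφ, sum_zeroExtend hFT, sum_image hk.injOn, Function.comp_apply]

/-- Let `k : Fin n → Fin n` be a bijection ordering the entries of `z` by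
decreasing magnitude, `A` the set of the `s` largest-magnitude entries, and
`I_t = {k_{st+1}, …, k_{(t+1)s}}` (0-based: images under `k` of indices `st ≤ j < s(t+1)`).
If `‖z_{Aᶜ}‖₁ ≤ 3‖z_A‖₁`, then `Σ_{t≥1} ‖z_{I_t}‖₂ ≤ 4‖z_A‖₂` and consequently
`‖z‖₂² ≤ 17‖z_A‖₂²`.  (For `t > n` the block `I_t` is empty, so the sum over `1 ≤ t ≤ n`
is the full sum.) -/
theorem shifting_cone_inequality
    (n s : ℕ) (hs : 1 ≤ s) (z : Fin n → ℝ) (k : Fin n → Fin n)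
    (hk : Function.Bijective k)
    (hsort : ∀ i j : Fin n, i ≤ j → |z (k j)| ≤ |z (k i)|)
    (A : Finset (Fin n))
    (hA : A = Finset.image k (Finset.univ.filter (fun j : Fin n => (j : ℕ) < s)))
    (I : ℕ → Finset (Fin n))
    (hI : ∀ t : ℕ, I t = Finset.image k
      (Finset.univ.filter (fun j : Fin n => s * t ≤ (j : ℕ) ∧ (j : ℕ) < s * (t + 1))))
    (hcone : ∑ j ∈ Aᶜ, |z j| ≤ 3 * ∑ j ∈ A, |z j|) :
    (∑ t ∈ Finset.Icc 1 n, Real.sqrt (∑ j ∈ I t, z j ^ 2)) ≤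
        4 * Real.sqrt (∑ j ∈ A, z j ^ 2) ∧
      (∑ j, z j ^ 2) ≤ 17 * ∑ j ∈ A, z j ^ 2 := by
  set a := zeroExtend ((|z ·|) ∘ k)
  have ha : Antitone a := antitone_zeroExtend hsort fun i => abs_nonneg _
  have h0 : 0 ≤ a := zeroExtend_nonneg fun i => abs_nonneg _
  have hsum := fun {φ : ℝ → ℝ} (hφ : φ 0 = 0) {F : Finset (Fin n)} {T : Finset ℕ}
      (hFT : ∀ i : Fin n, i ∈ F ↔ ↑i ∈ T) => sum_image_eq_sum_zeroExtend hk.injective (|z ·|) hφ hFT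
  have huniv : (univ : Finset (Fin n)) = univ.image k := (image_univ_of_surjective hk.2).symm
  have hA1 : ∑ j ∈ A, |z j| = ∑ j ∈ range s, a j := by
    rw [hA]; exact hsum (φ := id) rfl (by simp)
  have hA2 : ∑ j ∈ A, z j ^ 2 = ∑ j ∈ range s, a j ^ 2 := by
    simp_rw [← sq_abs (z _), hA]; exact hsum (φ := (· ^ 2)) (zero_pow two_ne_zero) (by simp)
  have hI2 : ∀ t, ∑ j ∈ I t, z j ^ 2 = ∑ j ∈ Ico (s * t) (s * (t + 1)), a j ^ 2 := fun t => by
    simp_rw [← sq_abs (z _), hI]; exact hsum (φ := (· ^ 2)) (zero_pow two_ne_zero) (by simp)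
  have hn : ∀ m, n ≤ m → ∀ i : Fin n, i ∈ univ ↔ ↑i ∈ range m := fun m hm i => by
    simpa using i.isLt.trans_le hm
  have hall1 : ∑ j, |z j| = ∑ j ∈ range (s * n), a j := by
    rw [huniv]; exact hsum (φ := id) rfl (hn _ (Nat.le_mul_of_pos_left n hs))
  have hall2 : ∑ j, z j ^ 2 = ∑ j ∈ range (s * (n + 1)), a j ^ 2 := by
    simp_rw [← sq_abs (z _)]
    rw [huniv]
    exact hsum (φ := (· ^ 2)) (zero_pow two_ne_zero) (hn _ (by nlinarith))
  have hcone' : ∑ j ∈ range (s * n), a j ≤ 4 * ∑ j ∈ range s, a j := by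
    rw [← hall1, ← hA1, ← sum_compl_add_sum A]
    linarith
  refine ⟨?_, ?_⟩
  · simp_rw [hI2, hA2]
    exact sum_sqrt_sum_sq_Ico_le_of_sum_le ha h0 hs (by norm_num) hcone'
  · rw [hall2, hA2]
    exact (sum_range_sq_le_of_sum_le ha h0 hs (by norm_num) hcone').trans_eq (by norm_num)
end
end
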